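/- arXiv:2402.00062 — 6 statements merged into one kernel-verified Lean document; each statement's English description precedes it below -/
import Mathlib

section
/- Let f : [0,1] → ℝ be continuously differentiable, let ω, ω′ ∈ [0,1/2) with ω ≤ ω′, and let a > 0 be such that A := a/(1 − 2(ω′ − ω)) < 1. Then ∫₀¹ (1−t)^{2ω} f(t)² dt ≤ sup_{t∈[0,1]} ((1−t)^{ω} f(t))² ≤ (1/(1−A)) f(0)² + (1/(a(1−A))) ∫₀¹ (1−t)^{2ω′} f′(t)² dt. -/
/-!
Write `f t = f 0 + ∫₀ᵗ f'` and apply Cauchy–Schwarz to `f' = (1 - s) ^ (-ω') · (1 - s) ^ ω' f'`.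
The singular weight is harmless: since `ω ≥ 0` and `s ≤ t`,
`(1 - t) ^ (2ω) ∫₀ᵗ (1 - s) ^ (-2ω') ≤ ∫₀ᵗ (1 - s) ^ (-2(ω' - ω)) ≤ 1 / (1 - 2(ω' - ω))`.
Splitting `(u + v)² ≤ u² / (1 - A) + v² / A` then bounds `((1 - t) ^ ω f t)²` uniformly in `t`;
the first inequality merely compares an integral over `[0, 1]` with the supremum of its integrand.
-/

open Real Set MeasureTheory

lemma rpow_sq_eq_rpow_two_mul {x : ℝ} (hx : 0 ≤ x) (y : ℝ) : (x ^ y) ^ 2 = x ^ (2 * y) := by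
  rw [mul_comm, ← rpow_mul_natCast hx]; norm_num

lemma sq_integral_mul_le {α : Type*} [MeasurableSpace α] {μ : Measure α} {p q : α → ℝ}
    (hp : MemLp p 2 μ) (hq : MemLp q 2 μ) :
    (∫ x, p x * q x ∂μ) ^ 2 ≤ (∫ x, p x ^ 2 ∂μ) * ∫ x, q x ^ 2 ∂μ := by
  have inner_toLp : ∀ {f g : α → ℝ} (hf : MemLp f 2 μ) (hg : MemLp g 2 μ),
      inner ℝ (hf.toLp f) (hg.toLp g) = ∫ x, f x * g x ∂μ := fun hf hg => by
    rw [L2.inner_def]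
    refine integral_congr_ae ?_
    filter_upwards [hf.coeFn_toLp, hg.coeFn_toLp] with x hfx hgx
    simp [hfx, hgx, mul_comm]
  have h := real_inner_mul_inner_self_le (hp.toLp p) (hq.toLp q)
  rw [inner_toLp, inner_toLp, inner_toLp] at h
  simpa only [sq] using h

lemma add_sq_le_sq_div_add_sq_div {u v A : ℝ} (hA0 : 0 < A) (hA1 : A < 1) :
    (u + v) ^ 2 ≤ u ^ 2 / (1 - A) + v ^ 2 / A := by
  have h1A : 0 < 1 - A := by linarith
  rw [div_add_div _ _ h1A.ne' hA0.ne', le_div_iff₀ (by positivity)]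
  nlinarith [sq_nonneg (A * u - (1 - A) * v)]

lemma intervalIntegral_le_mul_iSup_Icc {g : ℝ → ℝ} {a b : ℝ} (hab : a ≤ b)
    (hg : ContinuousOn g (Icc a b)) :
    ∫ t in a..b, g t ≤ (b - a) * ⨆ t : Icc a b, g t := by
  have hbdd : BddAbove (range fun t : Icc a b => g t) :=
    (isCompact_range hg.domRestrict).bddAbove
  calc ∫ t in a..b, g t ≤ ∫ _ in a..b, ⨆ t : Icc a b, g t :=
        intervalIntegral.integral_mono_on hab (hg.intervalIntegrable_of_Icc hab)
          intervalIntegrable_const fun t ht => le_ciSup hbdd ⟨t, ht⟩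
    _ = (b - a) * ⨆ t : Icc a b, g t := by rw [intervalIntegral.integral_const, smul_eq_mul]

lemma continuous_one_sub_rpow {r : ℝ} (hr : 0 ≤ r) : Continuous fun s : ℝ => (1 - s) ^ r :=
  (continuous_const.sub continuous_id).rpow_const fun _ => Or.inr hr

lemma intervalIntegrable_one_sub_rpow {r : ℝ} (hr : -1 < r) (a b : ℝ) :
    IntervalIntegrable (fun s : ℝ => (1 - s) ^ r) volume a b := by
  simpa using (intervalIntegral.intervalIntegrable_rpow' (a := 1 - a) (b := 1 - b) hr).comp_sub_left 1

lemma integral_one_sub_rpow_le {t r : ℝ} (ht : t ≤ 1) (hr : -1 < r) :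
    ∫ s in (0:ℝ)..t, (1 - s) ^ r ≤ 1 / (r + 1) := by
  rw [intervalIntegral.integral_comp_sub_left (fun x => x ^ r), sub_zero,
    integral_rpow (Or.inl hr), one_rpow]
  have : 0 ≤ (1 - t) ^ (r + 1) := rpow_nonneg (by linarith) _
  exact div_le_div_of_nonneg_right (by linarith) (by linarith)

lemma one_sub_rpow_mul_integral_one_sub_rpow_neg_le {t ω ω' : ℝ} (ht0 : 0 ≤ t) (ht1 : t ≤ 1)
    (hω : 0 ≤ ω) (hω' : ω' < 1 / 2) :
    (1 - t) ^ (2 * ω) * ∫ s in (0:ℝ)..t, (1 - s) ^ (-(2 * ω'))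
      ≤ 1 / (1 - 2 * (ω' - ω)) := by
  rw [← intervalIntegral.integral_const_mul]
  calc ∫ s in (0:ℝ)..t, (1 - t) ^ (2 * ω) * (1 - s) ^ (-(2 * ω'))
      ≤ ∫ s in (0:ℝ)..t, (1 - s) ^ (-2 * (ω' - ω)) := by
        refine intervalIntegral.integral_mono_on_of_le_Ioo ht0
          ((intervalIntegrable_one_sub_rpow (by linarith) _ _).const_mul _)
          (intervalIntegrable_one_sub_rpow (by linarith) _ _) fun s hs => ?_
        have hs1 : 0 < 1 - s := by linarith [hs.2]
        calc (1 - t) ^ (2 * ω) * (1 - s) ^ (-(2 * ω'))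
            ≤ (1 - s) ^ (2 * ω) * (1 - s) ^ (-(2 * ω')) := by
              gcongr; linarith [hs.2]
          _ = (1 - s) ^ (-2 * (ω' - ω)) := by rw [← rpow_add hs1]; ring_nf
    _ ≤ 1 / (1 - 2 * (ω' - ω)) := by
        convert integral_one_sub_rpow_le ht1 (r := -2 * (ω' - ω)) (by linarith) using 2; ring

lemma sq_intervalIntegral_le_mul_weighted {g : ℝ → ℝ} {t ω' : ℝ} (ht0 : 0 ≤ t) (ht1 : t ≤ 1)
    (hω'0 : 0 ≤ ω') (hω' : ω' < 1 / 2) (hg : ContinuousOn g (Icc 0 t)) :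
    (∫ s in (0:ℝ)..t, g s) ^ 2
      ≤ (∫ s in (0:ℝ)..t, (1 - s) ^ (-(2 * ω'))) * ∫ s in (0:ℝ)..t, (1 - s) ^ (2 * ω') * g s ^ 2 := by
  simp only [intervalIntegral.integral_of_le ht0, integral_Ioc_eq_integral_Ioo]
  have hpos : ∀ s ∈ Ioo 0 t, 0 < 1 - s := fun s hs => by linarith [hs.2]
  set p : ℝ → ℝ := fun s => (1 - s) ^ (-ω')
  set q : ℝ → ℝ := fun s => (1 - s) ^ ω' * g s
  have hp : MemLp p 2 (volume.restrict (Ioo 0 t)) := by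
    refine (memLp_two_iff_integrable_sq
      (by fun_prop : Measurable p).aestronglyMeasurable).2 ?_
    refine (((intervalIntegrable_one_sub_rpow (r := -(2 * ω')) (by linarith) 0 t).1.mono_set
      Ioo_subset_Ioc_self).congr_fun (fun s hs => ?_) measurableSet_Ioo)
    rw [rpow_sq_eq_rpow_two_mul (hpos s hs).le]; ring_nf
  have hq : MemLp q 2 (volume.restrict (Ioo 0 t)) := by
    have hqc : ContinuousOn q (Icc 0 t) :=
      (continuous_one_sub_rpow hω'0).continuousOn.mul hg
    refine (memLp_two_iff_integrable_sq
      ((hqc.mono Ioo_subset_Icc_self).aestronglyMeasurable measurableSet_Ioo)).2 ?_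
    exact (hqc.pow 2).integrableOn_Icc.mono_set Ioo_subset_Icc_self
  calc (∫ s in Ioo 0 t, g s) ^ 2 = (∫ s in Ioo 0 t, p s * q s) ^ 2 := by
        rw [setIntegral_congr_fun measurableSet_Ioo fun s hs => ?_]
        simp only [p, q, ← mul_assoc, ← rpow_add (hpos s hs), neg_add_cancel, rpow_zero, one_mul]
    _ ≤ (∫ s in Ioo 0 t, p s ^ 2) * ∫ s in Ioo 0 t, q s ^ 2 := sq_integral_mul_le hp hq
    _ = _ := by
        congr 1 <;> refine setIntegral_congr_fun measurableSet_Ioo fun s hs => ?_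
        · simp only [p, rpow_sq_eq_rpow_two_mul (hpos s hs).le, mul_neg]
        · simp only [q, mul_pow, rpow_sq_eq_rpow_two_mul (hpos s hs).le]

lemma sq_one_sub_rpow_mul_intervalIntegral_le {g : ℝ → ℝ} {t ω ω' : ℝ} (ht0 : 0 ≤ t)
    (ht1 : t ≤ 1) (hω : 0 ≤ ω) (hle : ω ≤ ω') (hω' : ω' < 1 / 2)
    (hg : ContinuousOn g (Icc 0 t)) :
    ((1 - t) ^ ω * ∫ s in (0:ℝ)..t, g s) ^ 2
      ≤ 1 / (1 - 2 * (ω' - ω)) * ∫ s in (0:ℝ)..t, (1 - s) ^ (2 * ω') * g s ^ 2 := by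
  have h1t : 0 ≤ 1 - t := by linarith
  calc ((1 - t) ^ ω * ∫ s in (0:ℝ)..t, g s) ^ 2
      = (1 - t) ^ (2 * ω) * (∫ s in (0:ℝ)..t, g s) ^ 2 := by
        rw [mul_pow, rpow_sq_eq_rpow_two_mul h1t]
    _ ≤ (1 - t) ^ (2 * ω) * ((∫ s in (0:ℝ)..t, (1 - s) ^ (-(2 * ω'))) *
          ∫ s in (0:ℝ)..t, (1 - s) ^ (2 * ω') * g s ^ 2) := by
        gcongr
        exact sq_intervalIntegral_le_mul_weighted ht0 ht1 (hω.trans hle) hω' hg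
    _ ≤ 1 / (1 - 2 * (ω' - ω)) * ∫ s in (0:ℝ)..t, (1 - s) ^ (2 * ω') * g s ^ 2 := by
        rw [← mul_assoc]
        gcongr
        · exact intervalIntegral.integral_nonneg ht0 fun s hs =>
            mul_nonneg (rpow_nonneg (by linarith [hs.2]) _) (sq_nonneg _)
        · exact one_sub_rpow_mul_integral_one_sub_rpow_neg_le ht0 ht1 hω hω'

lemma eq_add_intervalIntegral_of_hasDerivWithinAt {f f' : ℝ → ℝ} {a b t : ℝ}
    (hf : ∀ t ∈ Icc a b, HasDerivWithinAt f (f' t) (Icc a b) t)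
    (hf' : ContinuousOn f' (Icc a b)) (ht : t ∈ Icc a b) :
    f t = f a + ∫ s in a..t, f' s := by
  have hsub : Icc a t ⊆ Icc a b := Icc_subset_Icc_right ht.2
  rw [intervalIntegral.integral_eq_sub_of_hasDeriv_right_of_le ht.1
    (fun s hs => (hf s (hsub hs)).continuousWithinAt.mono hsub)
    (fun s hs => (hf s (hsub (Ioo_subset_Icc_self hs))).mono_of_mem_nhdsWithin
      (Icc_mem_nhdsGT_of_mem ⟨hs.1.le, hs.2.trans_le ht.2⟩))
    ((hf'.mono hsub).intervalIntegrable_of_Icc ht.1)]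
  ring

lemma sq_one_sub_rpow_mul_le {f f' : ℝ → ℝ} {ω ω' a t : ℝ}
    (hf : ∀ t ∈ Icc (0:ℝ) 1, HasDerivWithinAt f (f' t) (Icc (0:ℝ) 1) t)
    (hf' : ContinuousOn f' (Icc (0:ℝ) 1)) (hω : 0 ≤ ω) (hle : ω ≤ ω') (hω' : ω' < 1 / 2)
    (ha : 0 < a) (hA : a / (1 - 2 * (ω' - ω)) < 1) (ht : t ∈ Icc (0:ℝ) 1) :
    ((1 - t) ^ ω * f t) ^ 2
      ≤ 1 / (1 - a / (1 - 2 * (ω' - ω))) * f 0 ^ 2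
        + 1 / (a * (1 - a / (1 - 2 * (ω' - ω)))) * ∫ s in (0:ℝ)..1, (1 - s) ^ (2 * ω') * f' s ^ 2 := by
  obtain ⟨ht0, ht1⟩ := ht
  set c := 1 - 2 * (ω' - ω)
  have hc : 0 < c := by linarith
  set A := a / c
  have hA0 : 0 < A := div_pos ha hc
  have hcA : c * A = a := mul_div_cancel₀ a hc.ne'
  set I := ∫ s in (0:ℝ)..1, (1 - s) ^ (2 * ω') * f' s ^ 2
  have hsub : Icc 0 t ⊆ Icc (0:ℝ) 1 := Icc_subset_Icc_right ht1
  have hftc : f t = f 0 + ∫ s in (0:ℝ)..t, f' s :=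
    eq_add_intervalIntegral_of_hasDerivWithinAt hf hf' ⟨ht0, ht1⟩
  have h1t : 0 ≤ 1 - t := by linarith
  have hu : ((1 - t) ^ ω * f 0) ^ 2 ≤ f 0 ^ 2 := by
    rw [mul_pow]
    exact mul_le_of_le_one_left (sq_nonneg _)
      (pow_le_one₀ (rpow_nonneg h1t _) (rpow_le_one h1t (by linarith) hω))
  have hI_mono : ∫ s in (0:ℝ)..t, (1 - s) ^ (2 * ω') * f' s ^ 2 ≤ I := by
    refine intervalIntegral.integral_mono_interval le_rfl ht0 ht1
      ((ae_restrict_iff' measurableSet_Ioc).2 (Filter.Eventually.of_forall fun s hs => ?_)) ?_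
    · exact mul_nonneg (rpow_nonneg (by linarith [hs.2]) _) (sq_nonneg _)
    · exact ((continuous_one_sub_rpow (by linarith)).continuousOn.mul
        (hf'.pow 2)).intervalIntegrable_of_Icc zero_le_one
  have hv : ((1 - t) ^ ω * ∫ s in (0:ℝ)..t, f' s) ^ 2 ≤ 1 / c * I :=
    (sq_one_sub_rpow_mul_intervalIntegral_le ht0 ht1 hω hle hω' (hf'.mono hsub)).trans
      (mul_le_mul_of_nonneg_left hI_mono (one_div_nonneg.2 hc.le))
  have hI : 0 ≤ I := intervalIntegral.integral_nonneg zero_le_one fun s hs =>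
    mul_nonneg (rpow_nonneg (by linarith [hs.2]) _) (sq_nonneg _)
  calc ((1 - t) ^ ω * f t) ^ 2
      = ((1 - t) ^ ω * f 0 + (1 - t) ^ ω * ∫ s in (0:ℝ)..t, f' s) ^ 2 := by rw [hftc, mul_add]
    _ ≤ ((1 - t) ^ ω * f 0) ^ 2 / (1 - A) + ((1 - t) ^ ω * ∫ s in (0:ℝ)..t, f' s) ^ 2 / A :=
        add_sq_le_sq_div_add_sq_div hA0 hA
    _ ≤ f 0 ^ 2 / (1 - A) + 1 / c * I / A := by gcongr
    _ = 1 / (1 - A) * f 0 ^ 2 + 1 / a * I := by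
        rw [one_div_mul_eq_div, div_div, hcA]; ring
    _ ≤ 1 / (1 - A) * f 0 ^ 2 + 1 / (a * (1 - A)) * I := by
        gcongr
        nlinarith

/-- Basic one-dimensional integral estimate (Lemma 4.1):
`∫₀¹ (1−t)^{2ω} f(t)² dt ≤ sup_{t∈[0,1]} ((1−t)^ω f(t))²
  ≤ (1/(1−A)) f(0)² + (1/(a(1−A))) ∫₀¹ (1−t)^{2ω′} f′(t)² dt`
where `A = a/(1 − 2(ω′−ω))`. -/
theorem stmt0 (f f' : ℝ → ℝ) (ω ω' a : ℝ)
    (hf : ∀ t ∈ Set.Icc (0:ℝ) 1, HasDerivWithinAt f (f' t) (Set.Icc (0:ℝ) 1) t)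
    (hf' : ContinuousOn f' (Set.Icc (0:ℝ) 1))
    (hω : ω ∈ Set.Ico (0:ℝ) (1/2)) (hω' : ω' ∈ Set.Ico (0:ℝ) (1/2))
    (hle : ω ≤ ω') (ha : 0 < a)
    (hA : a / (1 - 2 * (ω' - ω)) < 1) :
    (∫ t in (0:ℝ)..1, (1 - t) ^ (2 * ω) * f t ^ 2)
      ≤ (⨆ t : Set.Icc (0:ℝ) 1, ((1 - (t : ℝ)) ^ ω * f (t : ℝ)) ^ 2) ∧
    (⨆ t : Set.Icc (0:ℝ) 1, ((1 - (t : ℝ)) ^ ω * f (t : ℝ)) ^ 2)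
      ≤ (1 / (1 - a / (1 - 2 * (ω' - ω)))) * f 0 ^ 2
        + (1 / (a * (1 - a / (1 - 2 * (ω' - ω)))))
          * ∫ t in (0:ℝ)..1, (1 - t) ^ (2 * ω') * f' t ^ 2 := by
  refine ⟨?_, ciSup_le fun t => sq_one_sub_rpow_mul_le hf hf' hω.1 hle hω'.2 ha hA t.2⟩
  have hfc : ContinuousOn f (Icc 0 1) := fun t ht => (hf t ht).continuousWithinAt
  calc ∫ t in (0:ℝ)..1, (1 - t) ^ (2 * ω) * f t ^ 2
      = ∫ t in (0:ℝ)..1, ((1 - t) ^ ω * f t) ^ 2 :=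
        intervalIntegral.integral_congr fun t ht => by
          rw [uIcc_of_le zero_le_one] at ht
          rw [mul_pow, rpow_sq_eq_rpow_two_mul (by linarith [ht.2])]
    _ ≤ (1 - 0) * ⨆ t : Icc (0:ℝ) 1, ((1 - (t : ℝ)) ^ ω * f t) ^ 2 :=
        intervalIntegral_le_mul_iSup_Icc zero_le_one
          (((continuous_one_sub_rpow hω.1).continuousOn.mul hfc).pow 2)
    _ = _ := by rw [sub_zero, one_mul]
end

section
/- For every ẑ ∈ [-1,0] (writing t := |ẑ| = -ẑ ∈ [0,1] and |ẑ|^a := t^a with the convention 0^a = 0 for a > 0) the following four inequalities hold: (i) for every a ∈ (0,1): a(1−|ẑ|) ≤ 1−|ẑ|^a ≤ 1−|ẑ|; (ii) for every b ∈ (1/2,1): |(1−|ẑ|) − b⁻¹(1−|ẑ|^b)| ≤ 8(1−b)(1−|ẑ|)²; (iii) for every δ ∈ (0,1), every a ∈ (0,1) and every ẑ ∈ [-1,-δ]: 1−|ẑ|^a ≤ ((−ln δ)/(1−δ)) · a · (1−|ẑ|); (iv) for every δ₁ ∈ (0,1) there exists a constant c(δ₁) > 0 such that for all a ∈ (0,1)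 and all ẑ ∈ [-1,0]: |ẑ|^{δ₁}(1−|ẑ|^a) ≤ c(δ₁) · a. -/
/-!
For `t ∈ [0, 1]` the map `a ↦ 1 - t ^ a` is controlled by three elementary facts: Bernoulli's
inequality `t ^ a ≤ 1 + a (t - 1)` (concavity of `t ↦ t ^ a` against its tangent at `1`), the
chord of `t ↦ t ^ a` from `δ` to `1`, and `1 - t ^ a ≤ -a log t` (from `log x ≤ x - 1`), the
last combined with `t ^ ε (-log t) ≤ 1 / ε`. The second-order bound (ii) comes from writing
`t = t ^ b * t ^ (1 - b)` and applying Bernoulli to the second factor, which gives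
`t ^ b ≥ t / (b + (1 - b) t)`.
-/

open Real Set

namespace Real

lemma mul_one_sub_le_one_sub_rpow {t a : ℝ} (ht : 0 ≤ t) (ha0 : 0 ≤ a) (ha1 : a ≤ 1) :
    a * (1 - t) ≤ 1 - t ^ a := by
  have := rpow_one_add_le_one_add_mul_self (s := t - 1) (by linarith) ha0 ha1
  rw [add_sub_cancel] at this
  linarith

lemma one_sub_rpow_le_mul_neg_log {t : ℝ} (ht : 0 < t) (a : ℝ) :
    1 - t ^ a ≤ a * -log t := by
  have := log_le_sub_one_of_pos (rpow_pos_of_pos ht a)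
  rw [log_rpow ht] at this
  linarith

lemma self_le_rpow_mul_add_mul {t a : ℝ} (ht : 0 ≤ t) (ha0 : 0 ≤ a) (ha1 : a ≤ 1) :
    t ≤ t ^ a * (a + (1 - a) * t) := by
  rcases ht.eq_or_lt with rfl | ht
  · simp only [mul_zero, add_zero]
    positivity
  have hbern : t ^ (1 - a) ≤ a + (1 - a) * t := by
    have := rpow_one_add_le_one_add_mul_self (s := t - 1) (by linarith) (sub_nonneg.2 ha1)
      (by linarith)
    rw [add_sub_cancel] at this
    linarith
  calc t = t ^ a * t ^ (1 - a) := by rw [← rpow_add ht, add_sub_cancel, rpow_one]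
    _ ≤ t ^ a * (a + (1 - a) * t) := by gcongr

lemma abs_one_sub_sub_inv_mul_one_sub_rpow_le {t b : ℝ} (ht : 0 ≤ t) (hb0 : 0 < b)
    (hb1 : b ≤ 1) :
    |(1 - t) - b⁻¹ * (1 - t ^ b)| ≤ (1 - b) * (1 - t) ^ 2 / b := by
  have hlower : b * (1 - t) ≤ 1 - t ^ b := mul_one_sub_le_one_sub_rpow ht hb0.le hb1
  have hD : 0 < b + (1 - b) * t := by nlinarith
  have hself := self_le_rpow_mul_add_mul ht hb0.le hb1
  -- with `s = 1 - t`: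
  -- `(1 - b * s - (1 - b) * s ^ 2) * (b + (1 - b) * t) = t - (1 - b) ^ 2 * s ^ 2 * t`
  have hupper : 1 - b * (1 - t) - (1 - b) * (1 - t) ^ 2 ≤ t ^ b := by
    refine le_of_mul_le_mul_right ?_ hD
    nlinarith [mul_nonneg (sq_nonneg ((1 - b) * (1 - t))) ht]
  rw [abs_sub_comm, inv_mul_eq_div, abs_of_nonneg, div_sub' hb0.ne',
    div_le_div_iff_of_pos_right hb0]
  · linarith
  · rw [sub_nonneg, le_div_iff₀' hb0]
    exact hlower

lemma one_sub_rpow_le_div_mul_one_sub_rpow {δ t a : ℝ} (hδ0 : 0 ≤ δ) (hδ1 : δ < 1)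
    (hδt : δ ≤ t) (ht1 : t ≤ 1) (ha0 : 0 ≤ a) (ha1 : a ≤ 1) :
    1 - t ^ a ≤ (1 - t) / (1 - δ) * (1 - δ ^ a) := by
  have hδ1' : 0 < 1 - δ := sub_pos.2 hδ1
  have hw₁ : 0 ≤ (1 - t) / (1 - δ) := by bound
  have hw₂ : 0 ≤ (t - δ) / (1 - δ) := by bound
  have hsum : (1 - t) / (1 - δ) + (t - δ) / (1 - δ) = 1 := by field_simp; ring
  have hconc : (1 - t) / (1 - δ) * δ ^ a + (t - δ) / (1 - δ) * 1 ^ a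
      ≤ ((1 - t) / (1 - δ) * δ + (t - δ) / (1 - δ) * 1) ^ a :=
    (concaveOn_rpow ha0 ha1).2 hδ0 (mem_Ici.2 zero_le_one) hw₁ hw₂ hsum
  have hcomb : (1 - t) / (1 - δ) * δ + (t - δ) / (1 - δ) * 1 = t := by field_simp; ring
  rw [hcomb, one_rpow] at hconc
  linarith

lemma rpow_mul_one_sub_rpow_le {t ε a : ℝ} (ht0 : 0 ≤ t) (ht1 : t ≤ 1) (hε : 0 < ε)
    (ha : 0 ≤ a) : t ^ ε * (1 - t ^ a) ≤ ε⁻¹ * a := by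
  rcases ht0.eq_or_lt with rfl | ht0
  · rw [zero_rpow hε.ne', zero_mul]
    positivity
  have hlog : t ^ ε * -log t ≤ 1 / ε := by
    have := abs_log_mul_self_rpow_lt t ε ht0 ht1 hε
    rw [abs_lt] at this
    linarith
  calc t ^ ε * (1 - t ^ a) ≤ t ^ ε * (a * -log t) := by
        gcongr
        exact one_sub_rpow_le_mul_neg_log ht0 a
    _ = a * (t ^ ε * -log t) := by ring
    _ ≤ a * (1 / ε) := by gcongr
    _ = ε⁻¹ * a := by ring

end Real

/-- Elementary weight-comparison lemma (Lemma B.2): inequalities relating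
`1 − |ẑ|^a` for different exponents `a` on `[-1,0]`, where `|ẑ| = −ẑ` and
powers are real powers. -/
theorem stmt1 :
    (∀ z ∈ Set.Icc (-1:ℝ) 0, ∀ a ∈ Set.Ioo (0:ℝ) 1,
      a * (1 - (-z)) ≤ 1 - (-z) ^ a ∧ 1 - (-z) ^ a ≤ 1 - (-z)) ∧
    (∀ z ∈ Set.Icc (-1:ℝ) 0, ∀ b ∈ Set.Ioo (1/2:ℝ) 1,
      |(1 - (-z)) - b⁻¹ * (1 - (-z) ^ b)| ≤ 8 * (1 - b) * (1 - (-z)) ^ 2) ∧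
    (∀ δ ∈ Set.Ioo (0:ℝ) 1, ∀ a ∈ Set.Ioo (0:ℝ) 1, ∀ z ∈ Set.Icc (-1:ℝ) (-δ),
      1 - (-z) ^ a ≤ ((-Real.log δ) / (1 - δ)) * a * (1 - (-z))) ∧
    (∀ δ₁ ∈ Set.Ioo (0:ℝ) 1, ∃ c > (0:ℝ), ∀ a ∈ Set.Ioo (0:ℝ) 1, ∀ z ∈ Set.Icc (-1:ℝ) 0,
      (-z) ^ δ₁ * (1 - (-z) ^ a) ≤ c * a) := by
  refine ⟨?_, ?_, ?_, ?_⟩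
  · rintro z ⟨hz1, hz0⟩ a ⟨ha0, ha1⟩
    exact ⟨mul_one_sub_le_one_sub_rpow (by linarith) ha0.le ha1.le,
      sub_le_sub_left (self_le_rpow_of_le_one (by linarith) (by linarith) ha1.le) 1⟩
  · rintro z ⟨hz1, hz0⟩ b ⟨hb0, hb1⟩
    refine (abs_one_sub_sub_inv_mul_one_sub_rpow_le (by linarith) (by linarith) hb1.le).trans
      ?_
    rw [div_le_iff₀ (by linarith)]
    calc (1 - b) * (1 - -z) ^ 2 ≤ (1 - b) * (1 - -z) ^ 2 * (8 * b) :=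
          le_mul_of_one_le_right (mul_nonneg (by linarith) (sq_nonneg _)) (by linarith)
      _ = 8 * (1 - b) * (1 - -z) ^ 2 * b := by ring
  · rintro δ ⟨hδ0, hδ1⟩ a ⟨ha0, ha1⟩ z ⟨hz1, hzδ⟩
    have hw : 0 ≤ (1 - -z) / (1 - δ) := div_nonneg (by linarith) (by linarith)
    calc 1 - (-z) ^ a ≤ (1 - -z) / (1 - δ) * (1 - δ ^ a) :=
          one_sub_rpow_le_div_mul_one_sub_rpow hδ0.le hδ1 (by linarith) (by linarith) ha0.le
            ha1.le
      _ ≤ (1 - -z) / (1 - δ) * (a * -log δ) := by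
          gcongr
          exact one_sub_rpow_le_mul_neg_log hδ0 a
      _ = -log δ / (1 - δ) * a * (1 - -z) := by ring
  · rintro δ₁ ⟨hδ₁0, -⟩
    refine ⟨δ₁⁻¹, inv_pos.2 hδ₁0, fun a ha z hz => ?_⟩
    exact rpow_mul_one_sub_rpow_le (by linarith [hz.2]) (by linarith [hz.1]) hδ₁0 ha.1.le
end

section
/- For every real p ∈ [1,∞) there exists a constant C_p > 0 such that for all c ∈ (0,1]: (∫₀¹ |(1−t^c)/c + ln t|^p dt)^{1/p} ≤ C_p · c. -/
/-!
For `t ∈ (0, 1]` put `y = c log t ≤ 0`. Then `(1 - t^c)/c + log t = (1 - e^y + y)/c`, and the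
second-order Taylor bound `|1 - e^y + y| ≤ y²/2` for `y ≤ 0` gives the pointwise estimate
`|(1 - t^c)/c + log t| ≤ c (log t)²/2`. Since `(log t)² ≤ 16 p² t^(-1/(2p))` on `(0, 1]`, the
`p`-th power of the integrand is at most `(8 p² c)^p t^(-1/2)`, whose integral over `(0, 1)`
is `2 (8 p² c)^p`.
-/

open Real Set MeasureTheory

lemma exp_le_one_add_add_sq_div_two {x : ℝ} (hx : x ≤ 0) : exp x ≤ 1 + x + x ^ 2 / 2 := by
  have hderiv (y : ℝ) : HasDerivAt (fun y => 1 + y + y ^ 2 / 2 - exp y) (1 + y - exp y) y :=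
    ((((hasDerivAt_id' y).const_add 1).add ((hasDerivAt_pow 2 y).div_const 2)).sub
      (hasDerivAt_exp y)).congr_deriv (by norm_num)
  have hanti : Antitone fun y => 1 + y + y ^ 2 / 2 - exp y :=
    antitone_of_hasDerivAt_nonpos hderiv fun y => by
      simpa only [Pi.zero_apply, sub_nonpos] using add_comm y 1 ▸ add_one_le_exp y
  simpa using hanti hx

lemma abs_one_sub_exp_add_le {x : ℝ} (hx : x ≤ 0) : |1 - exp x + x| ≤ x ^ 2 / 2 := by
  rw [abs_le]
  constructor <;> linarith [add_one_le_exp x, exp_le_one_add_add_sq_div_two hx, sq_nonneg x]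

lemma abs_one_sub_rpow_div_add_log_le {c t : ℝ} (hc : 0 < c) (ht : 0 < t) (ht1 : t ≤ 1) :
    |(1 - t ^ c) / c + log t| ≤ c * log t ^ 2 / 2 := by
  have hy : c * log t ≤ 0 := mul_nonpos_of_nonneg_of_nonpos hc.le (log_nonpos ht.le ht1)
  have hrw : (1 - t ^ c) / c + log t = (1 - exp (c * log t) + c * log t) / c := by
    rw [rpow_def_of_pos ht, mul_comm]
    field_simp
  rw [hrw, abs_div, abs_of_pos hc, div_le_iff₀ hc]
  nlinarith [abs_one_sub_exp_add_le hy]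

lemma sq_log_le_rpow_neg {t ε : ℝ} (ht : 0 < t) (ht1 : t ≤ 1) (hε : 0 < ε) :
    log t ^ 2 ≤ t ^ (-(2 * ε)) / ε ^ 2 := by
  have htε : 0 < t ^ ε := rpow_pos_of_pos ht ε
  have h : (log t * t ^ ε) ^ 2 ≤ (1 / ε) ^ 2 := by
    rw [← sq_abs]
    exact pow_le_pow_left₀ (abs_nonneg _) (abs_log_mul_self_rpow_lt t ε ht ht1 hε).le 2
  rw [mul_pow, div_pow, one_pow, le_div_iff₀ (by positivity)] at h
  rw [rpow_neg ht.le, mul_comm, rpow_mul ht.le, rpow_two, inv_div_left, ← one_div,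
    le_div_iff₀ (by positivity)]
  linarith

lemma rpow_abs_one_sub_rpow_div_add_log_le {p c t ε : ℝ} (hp : 0 < p) (hc : 0 < c) (ht : 0 < t)
    (ht1 : t ≤ 1) (hε : 0 < ε) :
    |(1 - t ^ c) / c + log t| ^ p ≤ (c / (2 * ε ^ 2)) ^ p * t ^ (-(2 * ε * p)) := by
  have habs : |(1 - t ^ c) / c + log t| ≤ c / (2 * ε ^ 2) * t ^ (-(2 * ε)) :=
    calc |(1 - t ^ c) / c + log t| ≤ c * log t ^ 2 / 2 := abs_one_sub_rpow_div_add_log_le hc ht ht1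
      _ ≤ c * (t ^ (-(2 * ε)) / ε ^ 2) / 2 := by gcongr; exact sq_log_le_rpow_neg ht ht1 hε
      _ = c / (2 * ε ^ 2) * t ^ (-(2 * ε)) := by ring
  calc |(1 - t ^ c) / c + log t| ^ p ≤ (c / (2 * ε ^ 2) * t ^ (-(2 * ε))) ^ p :=
        rpow_le_rpow (abs_nonneg _) habs hp.le
    _ = (c / (2 * ε ^ 2)) ^ p * t ^ (-(2 * ε * p)) := by
        rw [mul_rpow (by positivity) (by positivity), ← rpow_mul ht.le, neg_mul]

lemma intervalIntegral_le_of_le_mul_rpow {f : ℝ → ℝ} {K r : ℝ} (hr : -1 < r)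
    (hf₀ : ∀ t ∈ Ioc (0 : ℝ) 1, 0 ≤ f t) (hf : ∀ t ∈ Ioc (0 : ℝ) 1, f t ≤ K * t ^ r) :
    ∫ t in (0 : ℝ)..1, f t ≤ K / (r + 1) := by
  have hint : IntegrableOn (fun t : ℝ => K * t ^ r) (Ioc 0 1) :=
    ((intervalIntegral.intervalIntegrable_rpow' hr).const_mul K).1
  rw [intervalIntegral.integral_of_le zero_le_one]
  calc ∫ t in Ioc (0 : ℝ) 1, f t ≤ ∫ t in Ioc (0 : ℝ) 1, K * t ^ r :=
        integral_mono_of_nonneg (ae_restrict_of_forall_mem measurableSet_Ioc hf₀) hint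
          (ae_restrict_of_forall_mem measurableSet_Ioc hf)
    _ = K / (r + 1) := by
        rw [← intervalIntegral.integral_of_le zero_le_one, intervalIntegral.integral_const_mul,
          integral_rpow (Or.inl hr)]
        simp only [one_rpow, zero_rpow (by linarith : r + 1 ≠ 0), sub_zero, one_div]
        ring

/-- Quantitative `L^p` rate of convergence of `(1−t^c)/c` to `−ln t` as
`c → 0⁺`: `(∫₀¹ |(1−t^c)/c + ln t|^p dt)^{1/p} ≤ C_p c`. -/
theorem stmt4 (p : ℝ) (hp : 1 ≤ p) :
    ∃ C > (0:ℝ), ∀ c ∈ Set.Ioc (0:ℝ) 1,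
      (∫ t in (0:ℝ)..1, |(1 - t ^ c) / c + Real.log t| ^ p) ^ (1/p) ≤ C * c := by
  have hp0 : 0 < p := one_pos.trans_le hp
  refine ⟨2 ^ (1 / p) * 8 * p ^ 2, by positivity, ?_⟩
  rintro c ⟨hc, -⟩
  have hε : (0 : ℝ) < 1 / (4 * p) := by positivity
  have hK : c / (2 * (1 / (4 * p)) ^ 2) = 8 * p ^ 2 * c := by field_simp; ring
  have hr : -(2 * (1 / (4 * p)) * p) = -(1 / 2) := by field_simp; norm_num
  have hint : ∫ t in (0 : ℝ)..1, |(1 - t ^ c) / c + log t| ^ p ≤ 2 * (8 * p ^ 2 * c) ^ p := by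
    convert intervalIntegral_le_of_le_mul_rpow (by norm_num : (-1 : ℝ) < -(1 / 2))
      (fun t _ => by positivity) fun t ht =>
        hK ▸ hr ▸ rpow_abs_one_sub_rpow_div_add_log_le hp0 hc ht.1 ht.2 hε using 2
    ring
  calc (∫ t in (0 : ℝ)..1, |(1 - t ^ c) / c + log t| ^ p) ^ (1 / p)
      ≤ (2 * (8 * p ^ 2 * c) ^ p) ^ (1 / p) :=
        rpow_le_rpow (intervalIntegral.integral_nonneg zero_le_one fun t _ => by positivity)
          hint (by positivity)
    _ = 2 ^ (1 / p) * 8 * p ^ 2 * c := by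
        rw [mul_rpow (by positivity) (by positivity), ← rpow_mul (by positivity),
          mul_one_div_cancel hp0.ne', rpow_one]
        ring
end

section
/- Let α ∈ (1,2), δ ∈ (0,1), and let f : [-1,0] → ℝ be of class C^{α,δ}_{(hor)}. Then the limits c_j := lim_{z→0⁻} |z|^{j−α} f^{(j)}(z) exist for 2 ≤ j ≤ 5 and satisfy the recursion c_{j+1} = (j − α) c_j for j = 2, 3, 4. -/
open Real Set Filter Topology

/-- `f : [-1,0] → ℝ` is of class `C^{α,δ}_{(hor)}`: five times continuously
differentiable on `[-1,0)`, once continuously differentiable on `[-1,0]`, and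
for each `2 ≤ j ≤ 5` the function `z ↦ |z|^{j−α} f^{(j)}(z)` extends to a
`δ`-Hölder continuous function on `[-1,0]` (here `|z| = −z`). -/
def IsChor (α δ : ℝ) (f : ℝ → ℝ) : Prop :=
  ContDiffOn ℝ 5 f (Set.Ico (-1:ℝ) 0) ∧
  ContDiffOn ℝ 1 f (Set.Icc (-1:ℝ) 0) ∧
  ∀ j : ℕ, 2 ≤ j → j ≤ 5 →
    ∃ g : ℝ → ℝ,
      (∃ C : NNReal, HolderOnWith C δ.toNNReal g (Set.Icc (-1:ℝ) 0)) ∧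
      ∀ z ∈ Set.Ico (-1:ℝ) 0,
        g z = (-z) ^ ((j : ℝ) - α) * iteratedDerivWithin j f (Set.Ico (-1:ℝ) 0) z

/-!
Write `F_j(z) = |z|^{j-α} f^{(j)}(z)`. The Hölder extensions give the limits `c_j`, and on
`(-1,0)` the product rule gives `|z| F_j'(z) = F_{j+1}(z) - (j-α) F_j(z) → c_{j+1} - (j-α) c_j`.
A nonzero limit `L` would make `F_j' ≈ L / |z|`, whose integral diverges logarithmically: the mean
value theorem on `[a, a/2]`, where `|z|` is comparable to `|a|`, gives
`|F_j(a/2) - F_j(a)| ≥ |L| / 4` for all small `a`, contradicting the convergence of `F_j`.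
-/

theorem tendsto_nhdsLT_of_eqOn_Ico {F g : ℝ → ℝ} {a b : ℝ} (hab : a < b)
    (hg : ContinuousOn g (Icc a b)) (hFg : EqOn F g (Ico a b)) :
    Tendsto F (𝓝[<] b) (𝓝 (g b)) := by
  have hgb : Tendsto g (𝓝[Ico a b] b) (𝓝 (g b)) :=
    (hg b ⟨hab.le, le_rfl⟩).mono Ico_subset_Icc_self
  rw [nhdsWithin_Ico_eq_nhdsLT hab] at hgb
  refine hgb.congr' ?_
  rw [← nhdsWithin_Ico_eq_nhdsLT hab]
  exact hFg.symm.eventuallyEq_nhdsWithin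

theorem HasDerivAt.neg_rpow_mul {h : ℝ → ℝ} {h' x : ℝ} (p : ℝ) (hx : x < 0)
    (hh : HasDerivAt h h' x) :
    HasDerivAt (fun z => (-z) ^ p * h z)
      (((-x) ^ (p + 1) * h' - p * ((-x) ^ p * h x)) / -x) x := by
  have hx' : -x ≠ 0 := by linarith
  have hpow : HasDerivAt (fun z : ℝ => (-z) ^ p) (p * (-x) ^ (p - 1) * -1) x :=
    (hasDerivAt_rpow_const (Or.inl hx')).comp x (hasDerivAt_neg x)
  refine (hpow.mul hh).congr_deriv ?_
  have hx0 : x ≠ 0 := hx.ne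
  rw [rpow_add_one hx', rpow_sub_one hx']
  field_simp
  ring

theorem hasDerivAt_iteratedDerivWithin {f : ℝ → ℝ} {s : Set ℝ} {n : WithTop ℕ∞} {k : ℕ} {x : ℝ}
    (hf : ContDiffOn ℝ n f s) (hs : UniqueDiffOn ℝ s) (hk : k < n) (hx : s ∈ 𝓝 x) :
    HasDerivAt (iteratedDerivWithin k f s) (iteratedDerivWithin (k + 1) f s x) x := by
  rw [iteratedDerivWithin_succ]
  exact ((hf.differentiableOn_iteratedDerivWithin hk hs) x
    (mem_of_mem_nhds hx)).hasDerivWithinAt.hasDerivAt hx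

theorem exists_abs_le_two_mul_abs_sub {g φ : ℝ → ℝ} {a : ℝ} (ha : a < 0)
    (hg : ∀ x ∈ Icc a (a / 2), HasDerivAt g (φ x / -x) x) :
    ∃ ξ ∈ Ioo a (a / 2), |φ ξ| ≤ 2 * |g (a / 2) - g a| := by
  obtain ⟨ξ, hξ, hslope⟩ := exists_hasDerivAt_eq_slope g (fun x => φ x / -x) (by linarith)
    (fun x hx => (hg x hx).continuousAt.continuousWithinAt)
    (fun x hx => hg x (Ioo_subset_Icc_self hx))
  refine ⟨ξ, hξ, ?_⟩
  have hξ0 : 0 < -ξ := by linarith [hξ.2]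
  have hφ : φ ξ = (g (a / 2) - g a) * (2 * ξ / a) := by
    rw [div_eq_div_iff hξ0.ne' (by linarith)] at hslope
    rw [mul_div_assoc', eq_div_iff ha.ne]
    linear_combination (-2) * hslope
  have hratio : |2 * ξ / a| ≤ 2 := by
    rw [abs_le, le_div_iff_of_neg ha, div_le_iff_of_neg ha]
    constructor <;> linarith [hξ.1, hξ.2]
  rw [hφ, abs_mul]
  linarith [mul_le_mul_of_nonneg_left hratio (abs_nonneg (g (a / 2) - g a))]

theorem eq_zero_of_tendsto_nhdsLT_of_hasDerivAt {g φ : ℝ → ℝ} {c L : ℝ}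
    (hderiv : ∀ᶠ x in 𝓝[<] 0, HasDerivAt g (φ x / -x) x)
    (hg : Tendsto g (𝓝[<] 0) (𝓝 c)) (hφ : Tendsto φ (𝓝[<] 0) (𝓝 L)) : L = 0 := by
  by_contra hL
  have hL0 : 0 < |L| := abs_pos.2 hL
  have hφ_big : ∀ᶠ x in 𝓝[<] 0, |L| / 2 < |φ x| :=
    hφ.abs.eventually (lt_mem_nhds (by linarith))
  have hg_near : ∀ᶠ x in 𝓝[<] 0, |g x - c| < |L| / 8 := by
    have := Metric.tendsto_nhds.1 hg (|L| / 8) (by positivity)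
    simpa only [Real.dist_eq] using this
  obtain ⟨ε, hε, hsub⟩ :=
    mem_nhdsLT_iff_exists_Ioo_subset.1 ((hderiv.and hφ_big).and hg_near)
  have hε : ε < 0 := hε
  have hIcc : Icc (ε / 2) (ε / 2 / 2) ⊆ Ioo ε 0 :=
    fun x hx => ⟨by linarith [hx.1], by linarith [hx.2]⟩
  obtain ⟨ξ, hξ, hφξ⟩ := exists_abs_le_two_mul_abs_sub (by linarith)
    (fun x hx => (hsub (hIcc hx)).1.1)
  have hξφ := (hsub (hIcc (Ioo_subset_Icc_self hξ))).1.2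
  have ha := (hsub (hIcc (left_mem_Icc.2 (by linarith)))).2
  have hb := (hsub (hIcc (right_mem_Icc.2 (by linarith)))).2
  have hdiff := abs_sub_le (g (ε / 2 / 2)) c (g (ε / 2))
  rw [abs_sub_comm c] at hdiff
  linarith

theorem stmt9_general (α δ : ℝ) (hδ : δ ∈ Set.Ioo (0:ℝ) 1)
    (f : ℝ → ℝ) (hf : IsChor α δ f) :
    ∃ c : ℕ → ℝ,
      (∀ j : ℕ, 2 ≤ j → j ≤ 5 →
        Filter.Tendsto
          (fun z => (-z) ^ ((j : ℝ) - α) * iteratedDerivWithin j f (Set.Ico (-1:ℝ) 0) z)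
          (nhdsWithin 0 (Set.Iio 0)) (nhds (c j))) ∧
      (∀ j : ℕ, 2 ≤ j → j ≤ 4 → c (j + 1) = ((j : ℝ) - α) * c j) := by
  obtain ⟨hsmooth, -, hholder⟩ := hf
  set F : ℕ → ℝ → ℝ :=
    fun j z => (-z) ^ ((j : ℝ) - α) * iteratedDerivWithin j f (Ico (-1) 0) z
  have hlim : ∀ j, 2 ≤ j → j ≤ 5 → ∃ c, Tendsto (F j) (𝓝[<] 0) (𝓝 c) := by
    intro j h2 h5
    obtain ⟨g, ⟨C, hC⟩, hgF⟩ := hholder j h2 h5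
    exact ⟨g 0, tendsto_nhdsLT_of_eqOn_Ico (by norm_num)
      (hC.continuousOn (by simpa using hδ.1)) fun z hz => (hgF z hz).symm⟩
  refine ⟨fun j => limUnder (𝓝[<] 0) (F j),
    fun j h2 h5 => tendsto_nhds_limUnder (hlim j h2 h5), fun j h2 h4 => ?_⟩
  have hderiv : ∀ᶠ x in 𝓝[<] 0,
      HasDerivAt (F j) ((F (j + 1) x - (j - α) * F j x) / -x) x := by
    filter_upwards [Ioo_mem_nhdsLT (show (-1 : ℝ) < 0 by norm_num)] with x hx
    have hjx := hasDerivAt_iteratedDerivWithin (k := j) hsmooth (uniqueDiffOn_Ico _ _)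
      (by exact_mod_cast (by omega : j < 5)) (Ico_mem_nhds hx.1 hx.2)
    convert hjx.neg_rpow_mul ((j : ℝ) - α) hx.2 using 4
    push_cast
    ring_nf
  have hFj := tendsto_nhds_limUnder (hlim j h2 (by omega))
  rw [← sub_eq_zero]
  exact eq_zero_of_tendsto_nhdsLT_of_hasDerivAt hderiv hFj
    ((tendsto_nhds_limUnder (hlim (j + 1) (by omega) (by omega))).sub (hFj.const_mul _))

/-- For `f ∈ C^{α,δ}_{(hor)}`, the limits `c_j = lim_{z→0⁻} |z|^{j−α} f^{(j)}(z)`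
exist for `2 ≤ j ≤ 5` and satisfy `c_{j+1} = (j−α) c_j` for `j = 2,3,4`. -/
theorem stmt9 (α δ : ℝ) (hα : α ∈ Set.Ioo (1:ℝ) 2) (hδ : δ ∈ Set.Ioo (0:ℝ) 1)
    (f : ℝ → ℝ) (hf : IsChor α δ f) :
    ∃ c : ℕ → ℝ,
      (∀ j : ℕ, 2 ≤ j → j ≤ 5 →
        Filter.Tendsto
          (fun z => (-z) ^ ((j : ℝ) - α) * iteratedDerivWithin j f (Set.Ico (-1:ℝ) 0) z)
          (nhdsWithin 0 (Set.Iio 0)) (nhds (c j))) ∧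
      (∀ j : ℕ, 2 ≤ j → j ≤ 4 → c (j + 1) = ((j : ℝ) - α) * c j) :=
  stmt9_general α δ hδ f hf
end

section
/- Assume the self-similar ODE system. Then ψ(ẑ) ≥ 0 for every ẑ ∈ [-1,0). -/
/-!
`λ` stays positive: at a first zero of `λ`, equation (2) reads `r ẑ λ' = -Ω²/4 < 0`, so
`λ' > 0` there and `λ` would already have been negative just before. Then (1) and (6) combine
to `ẑ (r²ψ)' = -k r λ`, so `r²ψ` is strictly increasing; it vanishes at the axis `ẑ = -1`,
hence `ψ > 0` on `(-1,0)`, while `ψ(-1) = k/2 > 0`.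
-/

open Real Set Filter

/-- The `k`-self-similar Einstein-scalar-field ODE system in the interior
region, for the self-similar quantities `r, ν, λ, Ω, m` and the scalar-field
derivative `ψ = φ̊′` as functions of the self-similar coordinate `ẑ ∈ [-1,0)`
(with `|ẑ| = −ẑ` and `μ = 2m/r`), together with the algebraic identities and
the initial conditions at the axis `ẑ = −1`. -/
structure SSS (k : ℝ) (r ν lam Ω m ψ : ℝ → ℝ) : Prop where
  k_pos : 0 < k
  k_small : k ^ 2 < 1 / 3
  cont_r : ContinuousOn r (Set.Ico (-1 : ℝ) 0)
  cont_ν : ContinuousOn ν (Set.Ico (-1 : ℝ) 0)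
  cont_lam : ContinuousOn lam (Set.Ico (-1 : ℝ) 0)
  cont_Ω : ContinuousOn Ω (Set.Ico (-1 : ℝ) 0)
  cont_m : ContinuousOn m (Set.Ico (-1 : ℝ) 0)
  cont_ψ : ContinuousOn ψ (Set.Ico (-1 : ℝ) 0)
  diff_r : ∀ z ∈ Set.Ioo (-1 : ℝ) 0, DifferentiableAt ℝ r z
  diff_ν : ∀ z ∈ Set.Ioo (-1 : ℝ) 0, DifferentiableAt ℝ ν z
  diff_lam : ∀ z ∈ Set.Ioo (-1 : ℝ) 0, DifferentiableAt ℝ lam z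
  diff_Ω : ∀ z ∈ Set.Ioo (-1 : ℝ) 0, DifferentiableAt ℝ Ω z
  diff_m : ∀ z ∈ Set.Ioo (-1 : ℝ) 0, DifferentiableAt ℝ m z
  diff_ψ : ∀ z ∈ Set.Ioo (-1 : ℝ) 0, DifferentiableAt ℝ ψ z
  contd_r : ContinuousOn (deriv r) (Set.Ioo (-1 : ℝ) 0)
  contd_ν : ContinuousOn (deriv ν) (Set.Ioo (-1 : ℝ) 0)
  contd_lam : ContinuousOn (deriv lam) (Set.Ioo (-1 : ℝ) 0)
  contd_Ω : ContinuousOn (deriv Ω) (Set.Ioo (-1 : ℝ) 0)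
  contd_m : ContinuousOn (deriv m) (Set.Ioo (-1 : ℝ) 0)
  contd_ψ : ContinuousOn (deriv ψ) (Set.Ioo (-1 : ℝ) 0)
  r_pos : ∀ z ∈ Set.Ioo (-1 : ℝ) 0, 0 < r z
  Ω_pos : ∀ z ∈ Set.Ioo (-1 : ℝ) 0, 0 < Ω z
  eq1 : ∀ z ∈ Set.Ioo (-1 : ℝ) 0, deriv r z = lam z
  eq2 : ∀ z ∈ Set.Ioo (-1 : ℝ) 0,
    r z * z * deriv lam z = -(ν z * lam z) - (1/4) * Ω z ^ 2
  eq3 : ∀ z ∈ Set.Ioo (-1 : ℝ) 0,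
    r z * deriv ν z = -(ν z * lam z) - (1/4) * Ω z ^ 2
  eq4 : ∀ z ∈ Set.Ioo (-1 : ℝ) 0,
    2 * (Ω z)⁻¹ * ν z * z * deriv Ω z = z * deriv ν z + r z * (z * ψ z + k) ^ 2
  eq5 : ∀ z ∈ Set.Ioo (-1 : ℝ) 0,
    2 * (Ω z)⁻¹ * lam z * deriv Ω z = deriv lam z + r z * ψ z ^ 2
  eq6 : ∀ z ∈ Set.Ioo (-1 : ℝ) 0,
    r z * z * deriv ψ z = -2 * lam z * z * ψ z - k * lam z
  eq7 : ∀ z ∈ Set.Ioo (-1 : ℝ) 0,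
    2 * lam z * deriv m z = (1 - 2 * m z / r z) * r z ^ 2 * ψ z ^ 2
  eq8 : ∀ z ∈ Set.Ioo (-1 : ℝ) 0,
    2 * ν z * z * deriv m z
      = 2 * ν z * m z + (1 - 2 * m z / r z) * r z ^ 2 * (z * ψ z + k) ^ 2
  alg9 : ∀ z ∈ Set.Ioo (-1 : ℝ) 0, ν z + r z = z * lam z
  alg10 : ∀ z ∈ Set.Ioo (-1 : ℝ) 0,
    (1/4) * Ω z ^ 2 + ν z * lam z
      = r z ^ 2 * z * ψ z ^ 2 + 2 * k * z * lam z * r z * ψ z + k ^ 2 * r z * lam z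
  alg11 : ∀ z ∈ Set.Ioo (-1 : ℝ) 0, m z = (r z / 2) * (1 + 4 * ν z * lam z / Ω z ^ 2)
  init_r : r (-1) = 0
  init_ν : ν (-1) = -(1/2)
  init_lam : lam (-1) = 1/2
  init_Ω : Ω (-1) = 1
  init_m : m (-1) = 0
  init_ψ : ψ (-1) = k / 2

theorem pos_of_deriv_pos_at_zeros {f : ℝ → ℝ} {a b : ℝ} (hf : ContinuousOn f (Ico a b))
    (ha : 0 < f a) (hzero : ∀ x ∈ Ioo a b, f x = 0 → 0 < deriv f x) :
    ∀ x ∈ Ico a b, 0 < f x := by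
  intro x₁ hx₁
  by_contra! hfx₁
  have hsub : Icc a x₁ ⊆ Ico a b := Icc_subset_Ico_right hx₁.2
  have hclosed : IsClosed (Icc a x₁ ∩ f ⁻¹' Iic 0) :=
    (hf.mono hsub).preimage_isClosed_of_isClosed isClosed_Icc isClosed_Iic
  obtain ⟨z, ⟨hzI, hfz⟩, hleast⟩ : ∃ z, IsLeast (Icc a x₁ ∩ f ⁻¹' Iic 0) z :=
    (isCompact_Icc.of_isClosed_subset hclosed inter_subset_left).exists_isLeast
      ⟨x₁, right_mem_Icc.2 hx₁.1, hfx₁⟩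
  have hfz_eq : f z = 0 := by
    have hfaz : ContinuousOn f (Icc a z) := hf.mono ((Icc_subset_Icc_right hzI.2).trans hsub)
    obtain ⟨c, hc, hfc⟩ := intermediate_value_Icc' hzI.1 hfaz ⟨hfz, ha.le⟩
    have hcz : c = z := le_antisymm hc.2 (hleast ⟨⟨hc.1, hc.2.trans hzI.2⟩, hfc.le⟩)
    rwa [← hcz]
  have haz : a < z := hzI.1.lt_of_ne (by rintro rfl; linarith)
  have hderiv := hzero z ⟨haz, hzI.2.trans_lt hx₁.2⟩ hfz_eq
  obtain ⟨x, hsign, hx⟩ :=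
    (((eventually_nhdsWithin_sign_eq_of_deriv_pos hderiv hfz_eq).filter_mono
      nhdsWithin_le_nhds).and (Ioo_mem_nhdsLT haz)).exists
  have hfx : f x < 0 := by
    rwa [sign_neg (sub_neg.2 hx.2), sign_eq_neg_one_iff] at hsign
  exact (hleast ⟨⟨hx.1.le, hx.2.le.trans hzI.2⟩, hfx.le⟩).not_gt hx.2

namespace SSS

variable {k : ℝ} {r ν lam Ω m ψ : ℝ → ℝ}

theorem lam_pos (h : SSS k r ν lam Ω m ψ) : ∀ z ∈ Ico (-1 : ℝ) 0, 0 < lam z := by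
  refine pos_of_deriv_pos_at_zeros h.cont_lam (by rw [h.init_lam]; norm_num)
    fun z hz hlam ↦ ?_
  have h2 := h.eq2 z hz
  rw [hlam] at h2
  have hrz : r z * z < 0 := mul_neg_of_pos_of_neg (h.r_pos z hz) hz.2
  nlinarith [h.Ω_pos z hz]

theorem hasDerivAt_r_sq_mul_ψ (h : SSS k r ν lam Ω m ψ) {z : ℝ}
    (hz : z ∈ Ioo (-1 : ℝ) 0) :
    HasDerivAt (fun z ↦ r z ^ 2 * ψ z) (-(k * r z * lam z) / z) z := by
  have hr : HasDerivAt r (lam z) z := h.eq1 z hz ▸ (h.diff_r z hz).hasDerivAt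
  refine ((hr.pow 2).mul (h.diff_ψ z hz).hasDerivAt).congr_deriv ?_
  rw [Pi.pow_apply, eq_div_iff hz.2.ne]
  linear_combination r z * h.eq6 z hz

theorem strictMonoOn_r_sq_mul_ψ (h : SSS k r ν lam Ω m ψ) :
    StrictMonoOn (fun z ↦ r z ^ 2 * ψ z) (Ico (-1 : ℝ) 0) := by
  refine strictMonoOn_of_deriv_pos (convex_Ico _ _) ((h.cont_r.pow 2).mul h.cont_ψ) ?_
  rw [interior_Ico]
  intro z hz
  rw [(h.hasDerivAt_r_sq_mul_ψ hz).deriv]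
  have hkrlam : 0 < k * r z * lam z :=
    mul_pos (mul_pos h.k_pos (h.r_pos z hz)) (h.lam_pos z (Ioo_subset_Ico_self hz))
  exact div_pos_of_neg_of_neg (neg_neg_of_pos hkrlam) hz.2

theorem ψ_pos (h : SSS k r ν lam Ω m ψ) : ∀ z ∈ Ico (-1 : ℝ) 0, 0 < ψ z := by
  rintro z ⟨hz₁, hz₂⟩
  rcases hz₁.eq_or_lt with rfl | hz₁
  · rw [h.init_ψ]
    exact half_pos h.k_pos
  · have hmono :=
      h.strictMonoOn_r_sq_mul_ψ (left_mem_Ico.2 (by norm_num)) ⟨hz₁.le, hz₂⟩ hz₁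
    simp only [h.init_r, zero_pow two_ne_zero, zero_mul] at hmono
    exact pos_of_mul_pos_right hmono (sq_nonneg _)

end SSS

/-- Positivity of the scalar-field derivative: `ψ(ẑ) ≥ 0` on `[-1,0)`. -/
theorem stmt12 (k : ℝ) (r ν lam Ω m ψ : ℝ → ℝ) (h : SSS k r ν lam Ω m ψ) :
    ∀ z ∈ Set.Ico (-1 : ℝ) 0, 0 ≤ ψ z :=
  fun z hz ↦ (h.ψ_pos z hz).le
end

section
/- Assume the self-similar ODE system. Then for every ẑ ∈ (-1,0): d/dẑ (|ẑ|^{k²} λ(ẑ)) = −r(ẑ)|ẑ|^{k²} ψ(ẑ)² − 2k|ẑ|^{k²} λ(ẑ) ψ(ẑ), and d/dẑ (|ẑ|^{k²/2} Ω(ẑ)) = −k ψ(ẑ) · |ẑ|^{k²/2} Ω(ẑ). -/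
open Real Set Filter

/-! Eliminating `Ω²` between (2) and (10) gives `λ' = −rψ² − 2kλψ − k²λ/ẑ`. Since (2) and (3) say
`ẑλ' = ν'`, the combination `ẑ·(5) − (4)/ẑ` has left side `2(ẑλ − ν)Ω'/Ω = 2rΩ'/Ω` by (9), whence
`Ω' = −kψΩ − k²Ω/(2ẑ)`. The weights `|ẑ|^{k²}` and `|ẑ|^{k²/2}` are integrating factors for the
`1/ẑ` terms. -/

theorem hasDerivAt_neg_rpow_mul {f : ℝ → ℝ} {f' z : ℝ} (a : ℝ) (hz : z < 0)
    (hf : HasDerivAt f f' z) :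
    HasDerivAt (fun w => (-w) ^ a * f w) ((-z) ^ a * (f' + a * f z / z)) z := by
  have hnz : -z ≠ 0 := by linarith
  have hpow : HasDerivAt (fun w : ℝ => (-w) ^ a) (a * (-z) ^ (a - 1) * (-1)) z :=
    (Real.hasDerivAt_rpow_const (p := a) (Or.inl hnz)).comp z (hasDerivAt_neg z)
  refine (hpow.mul hf).congr_deriv ?_
  rw [Real.rpow_sub_one hnz]
  field_simp
  ring

namespace SSS

variable {k : ℝ} {r ν lam Ω m ψ : ℝ → ℝ} {z : ℝ}

theorem deriv_lam_eq (h : SSS k r ν lam Ω m ψ) (hz : z ∈ Set.Ioo (-1 : ℝ) 0) :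
    deriv lam z = -(r z * ψ z ^ 2) - 2 * k * lam z * ψ z - k ^ 2 * lam z / z := by
  have hr := (h.r_pos z hz).ne'
  have hz0 := hz.2.ne
  have key : r z * z * deriv lam z
      = r z * z * (-(r z * ψ z ^ 2) - 2 * k * lam z * ψ z) - k ^ 2 * r z * lam z := by
    linear_combination h.eq2 z hz - h.alg10 z hz
  field_simp
  apply mul_left_cancel₀ hr
  linear_combination key

theorem deriv_Ω_eq (h : SSS k r ν lam Ω m ψ) (hz : z ∈ Set.Ioo (-1 : ℝ) 0) :
    deriv Ω z = -(k * ψ z) * Ω z - k ^ 2 * Ω z / (2 * z) := by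
  have hr := (h.r_pos z hz).ne'
  have hΩ := (h.Ω_pos z hz).ne'
  have hz0 := hz.2.ne
  have e4 : 2 * ν z * z * deriv Ω z = Ω z * (z * deriv ν z + r z * (z * ψ z + k) ^ 2) := by
    rw [← h.eq4 z hz]; field_simp
  have e5 : 2 * lam z * deriv Ω z = Ω z * (deriv lam z + r z * ψ z ^ 2) := by
    rw [← h.eq5 z hz]; field_simp
  have hdν : deriv ν z = z * deriv lam z := by
    apply mul_left_cancel₀ hr
    linear_combination h.eq3 z hz - h.eq2 z hz
  have key : 2 * r z * z * deriv Ω z = -(Ω z * r z * (2 * k * z * ψ z + k ^ 2)) := by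
    linear_combination z * e5 * z - e4 + 2 * z * deriv Ω z * h.alg9 z hz - Ω z * z * hdν
  field_simp
  apply mul_left_cancel₀ hr
  linear_combination key

end SSS

/-- Monotonicity identities for the weighted quantities:
`d/dẑ (|ẑ|^{k²} λ) = −r|ẑ|^{k²}ψ² − 2k|ẑ|^{k²}λψ` and
`d/dẑ (|ẑ|^{k²/2} Ω) = −kψ · |ẑ|^{k²/2} Ω` on `(-1,0)` (with `|ẑ| = −ẑ`). -/
theorem stmt14 (k : ℝ) (r ν lam Ω m ψ : ℝ → ℝ) (h : SSS k r ν lam Ω m ψ) :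
    ∀ z ∈ Set.Ioo (-1 : ℝ) 0,
      HasDerivAt (fun w => (-w) ^ (k ^ 2) * lam w)
        (-(r z * (-z) ^ (k ^ 2) * ψ z ^ 2) - 2 * k * (-z) ^ (k ^ 2) * lam z * ψ z) z ∧
      HasDerivAt (fun w => (-w) ^ (k ^ 2 / 2) * Ω w)
        (-(k * ψ z) * ((-z) ^ (k ^ 2 / 2) * Ω z)) z := by
  intro z hz
  constructor
  · refine (hasDerivAt_neg_rpow_mul (k ^ 2) hz.2 (h.diff_lam z hz).hasDerivAt).congr_deriv ?_
    rw [h.deriv_lam_eq hz]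
    ring
  · refine (hasDerivAt_neg_rpow_mul (k ^ 2 / 2) hz.2 (h.diff_Ω z hz).hasDerivAt).congr_deriv ?_
    rw [h.deriv_Ω_eq hz]
    ring
end
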